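/- For all factor indices k₁, k₂ ∈ {1,…,r}, the cross-covariance matrix between the half-vectorized scores 𝒟_{q_{k₁}}ᵀ·s_{k₁} and 𝒟_{q_{k₂}}ᵀ·s_{k₂} equals Cov(𝒟_{q_{k₁}}ᵀ·s_{k₁}, 𝒟_{q_{k₂}}ᵀ·s_{k₂}) = (1/2)·𝒟_{q_{k₁}}ᵀ·[ ∑_{i=1}^{l_{k₁}} ∑_{j=1}^{l_{k₂}} ( Z_{(k₁,i)}ᵀ·V⁻¹·Z_{(k₂,j)} ) ⊗ ( Z_{(k₁,i)}ᵀ·V⁻¹·Z_{(k₂,j)} ) ]·𝒟_{q_{k₂}}, where ⊗ denotes the Kronecker product of matrices. -/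

import Mathlib

/-!
Writing `e = σ R u`, the matrix `σ⁻² e eᵀ - V` equals `R (u uᵀ - 1) Rᵀ`, so every coordinate of
`𝒟ᵀ s_k` is a linear functional `tr (C (u uᵀ - 1))` of the centred matrix `u uᵀ - 1`, where `C`
is built from the rows of the matrices `Z_{(k,j)}ᵀ V⁻¹ R`. The fourth moments of independent
standard normals (Isserlis' theorem) give
`Cov (tr (C₁ (u uᵀ - 1)), tr (C₂ (u uᵀ - 1))) = tr (C₁ C₂) + tr (C₁ C₂ᵀ)`.
The duplication matrix makes these `C` symmetric, so the covariance is `2 tr (C₁ C₂ᵀ)`, and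
expanding this trace produces the Kronecker products `(Zᵀ V⁻¹ Z) ⊗ (Zᵀ V⁻¹ Z)` because
`(Z₁ᵀ V⁻¹ R) (Z₂ᵀ V⁻¹ R)ᵀ = Z₁ᵀ V⁻¹ Z₂`.
-/

open Matrix MeasureTheory ProbabilityTheory

/-- Column-major vectorization of a matrix: the entry of `vec A` at index `(j, i)`
(column `j`, row `i`) is `A i j`. -/
def vec {α β R : Type*} (A : Matrix α β R) : β × α → R := fun p => A p.2 p.1

/-- Index type for the half-vectorization of a `q × q` matrix: pairs `(j, i)`
(column `j`, row `i`) lying on or below the diagonal, i.e. with `j ≤ i`. -/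
abbrev VechIdx (q : ℕ) := { p : Fin q × Fin q // p.1 ≤ p.2 }

/-- Half-vectorization: stacks the entries of `A` on and below the diagonal column by column. -/
def vech {R : Type*} {q : ℕ} (A : Matrix (Fin q) (Fin q) R) : VechIdx q → R :=
  fun p => A p.1.2 p.1.1

/-- The duplication matrix `𝒟_q`: the unique `q² × (q(q+1)/2)` matrix with
`𝒟_q · vech A = vec A` for every symmetric `q × q` matrix `A`. -/
def dup (q : ℕ) : Matrix (Fin q × Fin q) (VechIdx q) ℝ := fun v w =>
  if (v.1 = w.1.1 ∧ v.2 = w.1.2) ∨ (v.1 = w.1.2 ∧ v.2 = w.1.1) then 1 else 0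

/-- The commutation matrix `K_{q,q}`: the unique `q² × q²` matrix with
`K_{q,q} · vec A = vec Aᵀ` for every `q × q` matrix `A`. -/
def commMat (q : ℕ) : Matrix (Fin q × Fin q) (Fin q × Fin q) ℝ := fun a b =>
  if a.1 = b.2 ∧ a.2 = b.1 then 1 else 0

/-- The symmetrization matrix `N_q = (1/2)(I_{q²} + K_{q,q})`. -/
noncomputable def Nmat (q : ℕ) : Matrix (Fin q × Fin q) (Fin q × Fin q) ℝ :=
  (1 / 2 : ℝ) • (1 + commMat q)

/-- The unique symmetric matrix whose half-vectorization is `v`. -/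
def unvech {q : ℕ} (v : VechIdx q → ℝ) : Matrix (Fin q) (Fin q) ℝ := fun i j =>
  if h : j ≤ i then v ⟨(j, i), h⟩ else v ⟨(i, j), le_of_not_ge h⟩

open Real

lemma integrable_pow_mul_exp_neg_sq_div_two (k : ℕ) :
    Integrable fun x : ℝ => x ^ k * exp (-x ^ 2 / 2) := by
  have := integrable_rpow_mul_exp_neg_mul_sq (b := 1 / 2) (by norm_num) (s := k)
    (by linarith [k.cast_nonneg (α := ℝ)])
  convert this using 2 with x
  rw [rpow_natCast]; ring_nf

lemma integral_pow_add_two_mul_exp_neg_sq_div_two (m : ℕ) :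
    ∫ x : ℝ, x ^ (m + 2) * exp (-x ^ 2 / 2) = (m + 1) * ∫ x : ℝ, x ^ m * exp (-x ^ 2 / 2) := by
  have hderiv (x : ℝ) : HasDerivAt (fun x => x ^ (m + 1) * exp (-x ^ 2 / 2))
      ((m + 1) * (x ^ m * exp (-x ^ 2 / 2)) - x ^ (m + 2) * exp (-x ^ 2 / 2)) x := by
    have h : HasDerivAt (fun x : ℝ => -x ^ 2 / 2) (-x) x :=
      ((hasDerivAt_pow 2 x).fun_neg.div_const 2).congr_deriv (by norm_num; ring)
    exact ((hasDerivAt_pow (m + 1) x).fun_mul h.exp).congr_deriv (by push_cast; ring)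
  have hint := integrable_pow_mul_exp_neg_sq_div_two
  have := integral_eq_zero_of_hasDerivAt_of_integrable hderiv
    (((hint m).const_mul _).sub (hint (m + 2))) (hint (m + 1))
  rw [integral_sub ((hint m).const_mul _) (hint (m + 2)), integral_const_mul] at this
  linarith

lemma integral_gaussianReal_zero_one (f : ℝ → ℝ) :
    ∫ x, f x ∂gaussianReal 0 1 = (√(2 * π))⁻¹ * ∫ x, f x * exp (-x ^ 2 / 2) := by
  rw [integral_gaussianReal_eq_integral_smul one_ne_zero, ← integral_const_mul]
  congr 1 with x
  simp only [gaussianPDFReal, smul_eq_mul, NNReal.coe_one, mul_one, sub_zero]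
  ring

lemma integrable_pow_gaussianReal (k : ℕ) : Integrable (fun x : ℝ => x ^ k) (gaussianReal 0 1) :=
  ((memLp_id_gaussianReal k).integrable_norm_pow').mono' (by fun_prop) (by simp)

lemma integral_pow_add_two_gaussianReal (m : ℕ) :
    ∫ x, x ^ (m + 2) ∂gaussianReal 0 1 = (m + 1) * ∫ x, x ^ m ∂gaussianReal 0 1 := by
  rw [integral_gaussianReal_zero_one, integral_gaussianReal_zero_one,
    integral_pow_add_two_mul_exp_neg_sq_div_two]
  ring

lemma integral_pow_two_gaussianReal : ∫ x, x ^ 2 ∂gaussianReal 0 1 = 1 := by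
  simpa using integral_pow_add_two_gaussianReal 0

lemma integral_pow_three_gaussianReal : ∫ x, x ^ 3 ∂gaussianReal 0 1 = 0 := by
  simpa using integral_pow_add_two_gaussianReal 1

lemma integral_pow_four_gaussianReal : ∫ x, x ^ 4 ∂gaussianReal 0 1 = 3 := by
  rw [integral_pow_add_two_gaussianReal 2, integral_pow_two_gaussianReal]; norm_num

section
variable {ι : Type*} [Fintype ι] [DecidableEq ι]

local notation "γ" => Measure.pi fun _ : ι => gaussianReal 0 1

omit [DecidableEq ι] in
lemma integrable_prod_pow_pi (c : ι → ℕ) : Integrable (fun x => ∏ i, x i ^ c i) γ :=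
  Integrable.fintype_prod fun i => integrable_pow_gaussianReal (c i)

omit [DecidableEq ι] in
lemma integral_prod_pow_pi (c : ι → ℕ) :
    ∫ x, ∏ i, x i ^ c i ∂γ = ∏ i, ∫ t, t ^ c i ∂gaussianReal 0 1 :=
  integral_fintype_prod_eq_prod (fun i t => t ^ c i)

lemma mul_eq_prod_pow (x : ι → ℝ) (m n : ι) :
    x m * x n = ∏ i, x i ^ ((if i = m then 1 else 0) + (if i = n then 1 else 0)) := by
  simp only [pow_add, Finset.prod_mul_distrib, pow_ite, pow_one, pow_zero, Finset.prod_ite_eq',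
    Finset.mem_univ, if_true]

lemma mul_mul_mul_eq_prod_pow (x : ι → ℝ) (m n p q : ι) :
    x m * x n * x p * x q = ∏ i, x i ^ ((if i = m then 1 else 0) + (if i = n then 1 else 0)
      + (if i = p then 1 else 0) + (if i = q then 1 else 0)) := by
  simp only [pow_add, Finset.prod_mul_distrib, pow_ite, pow_one, pow_zero, Finset.prod_ite_eq',
    Finset.mem_univ, if_true]

lemma integrable_mul_pi (m n : ι) : Integrable (fun x => x m * x n) γ := by
  simp_rw [mul_eq_prod_pow]
  exact integrable_prod_pow_pi _

lemma integrable_mul_mul_mul_pi (m n p q : ι) :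
    Integrable (fun x => x m * x n * x p * x q) γ := by
  simp_rw [mul_mul_mul_eq_prod_pow]
  exact integrable_prod_pow_pi _

lemma integral_mul_pi (m n : ι) : ∫ x, x m * x n ∂γ = if m = n then 1 else 0 := by
  simp only [mul_eq_prod_pow, integral_prod_pow_pi]
  rw [← Finset.prod_subset (Finset.subset_univ {m, n})]
  · by_cases hmn : m = n <;> simp_all [Finset.prod_insert, eq_comm, integral_pow_two_gaussianReal]
  · intro i _ hi
    simp only [Finset.mem_insert, Finset.mem_singleton, not_or] at hi
    simp [hi]

lemma integral_mul_mul_mul_pi (m n p q : ι) :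
    ∫ x, x m * x n * x p * x q ∂γ =
      (if m = p then 1 else 0) * (if n = q then 1 else 0)
        + (if m = q then 1 else 0) * (if n = p then 1 else 0)
        + (if m = n then 1 else 0) * (if p = q then 1 else 0) := by
  simp only [mul_mul_mul_eq_prod_pow, integral_prod_pow_pi]
  rw [← Finset.prod_subset (Finset.subset_univ {m, n, p, q})]
  -- Only the multiplicities matter: an odd one gives a vanishing odd moment, while the
  -- patterns `2 + 2` and `4` give `1 * 1` and `3`.
  · by_cases hmn : m = n <;> by_cases hmp : m = p <;> by_cases hmq : m = q <;>
      by_cases hnp : n = p <;> by_cases hnq : n = q <;> by_cases hpq : p = q <;>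
      simp_all [Finset.prod_insert, eq_comm, integral_pow_two_gaussianReal,
        integral_pow_three_gaussianReal, integral_pow_four_gaussianReal]
    norm_num
  · intro i _ hi
    simp only [Finset.mem_insert, Finset.mem_singleton, not_or] at hi
    simp [hi]

lemma integral_vecMulVec_sub_one_apply_pi (i j : ι) : ∫ x, (vecMulVec x x - 1) i j ∂γ = 0 := by
  simp only [Matrix.sub_apply, vecMulVec_apply]
  rw [integral_sub (integrable_mul_pi i j) (integrable_const _), integral_mul_pi]
  simp [one_apply]

omit [Fintype ι] in
lemma vecMulVec_sub_one_apply_mul_apply (x : ι → ℝ) (i j k l : ι) :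
    (vecMulVec x x - 1) i j * (vecMulVec x x - 1) k l =
      x i * x j * x k * x l - ((1 : Matrix ι ι ℝ) k l * (x i * x j)
        + (1 : Matrix ι ι ℝ) i j * (x k * x l))
        + (1 : Matrix ι ι ℝ) i j * (1 : Matrix ι ι ℝ) k l := by
  simp only [Matrix.sub_apply, vecMulVec_apply]
  ring

lemma integrable_vecMulVec_sub_one_apply_mul_apply_pi (i j k l : ι) :
    Integrable (fun x => (vecMulVec x x - 1) i j * (vecMulVec x x - 1) k l) γ := by
  simp_rw [vecMulVec_sub_one_apply_mul_apply]
  have h₄ := integrable_mul_mul_mul_pi (ι := ι) i j k l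
  have hij := (integrable_mul_pi (ι := ι) i j).const_mul ((1 : Matrix ι ι ℝ) k l)
  have hkl := (integrable_mul_pi (ι := ι) k l).const_mul ((1 : Matrix ι ι ℝ) i j)
  fun_prop

lemma integral_vecMulVec_sub_one_apply_mul_apply_pi (i j k l : ι) :
    ∫ x, (vecMulVec x x - 1) i j * (vecMulVec x x - 1) k l ∂γ =
      (if i = k then 1 else 0) * (if j = l then 1 else 0)
        + (if i = l then 1 else 0) * (if j = k then 1 else 0) := by
  have h₄ := integrable_mul_mul_mul_pi (ι := ι) i j k l
  have hij := (integrable_mul_pi (ι := ι) i j).const_mul ((1 : Matrix ι ι ℝ) k l)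
  have hkl := (integrable_mul_pi (ι := ι) k l).const_mul ((1 : Matrix ι ι ℝ) i j)
  simp_rw [vecMulVec_sub_one_apply_mul_apply]
  rw [integral_add (by fun_prop) (integrable_const _), integral_sub h₄ (by fun_prop),
    integral_add hij hkl, integral_const_mul, integral_const_mul, integral_mul_pi,
    integral_mul_pi, integral_mul_mul_mul_pi]
  simp only [one_apply, integral_const, probReal_univ, smul_eq_mul, one_mul]
  ring

omit [DecidableEq ι] in
lemma trace_mul_eq_sum (C W : Matrix ι ι ℝ) :
    trace (C * W) = ∑ p : ι × ι, C p.1 p.2 * W p.2 p.1 := by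
  simp [trace, mul_apply, Fintype.sum_prod_type]

lemma integral_trace_mul_vecMulVec_sub_one_pi (C : Matrix ι ι ℝ) :
    ∫ x, trace (C * (vecMulVec x x - 1)) ∂γ = 0 := by
  simp_rw [trace_mul_eq_sum]
  rw [integral_finsetSum _ fun p _ =>
    ((integrable_mul_pi p.2 p.1).sub (integrable_const _)).const_mul _]
  simp only [integral_const_mul, integral_vecMulVec_sub_one_apply_pi, mul_zero,
    Finset.sum_const_zero]

lemma integral_trace_mul_mul_trace_mul_pi (C₁ C₂ : Matrix ι ι ℝ) :
    ∫ x, trace (C₁ * (vecMulVec x x - 1)) * trace (C₂ * (vecMulVec x x - 1)) ∂γ =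
      trace (C₁ * C₂) + trace (C₁ * C₂ᵀ) := by
  simp_rw [trace_mul_eq_sum, Finset.sum_mul_sum, ← Fintype.sum_prod_type', mul_mul_mul_comm]
  rw [integral_finsetSum _ fun p _ =>
    (integrable_vecMulVec_sub_one_apply_mul_apply_pi _ _ _ _).const_mul _]
  simp only [integral_const_mul, integral_vecMulVec_sub_one_apply_mul_apply_pi]
  simp [Fintype.sum_prod_type, mul_add, Finset.sum_add_distrib, mul_ite, add_comm]
end

section
variable {ι ι' κ κ' ν α β : Type*} [Fintype ι] [Fintype ι'] [Fintype κ] [Fintype κ'] [Fintype ν]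

omit [Fintype κ] in
lemma mul_mul_transpose_apply_eq_trace (A : Matrix κ ν ℝ) (W : Matrix ν ν ℝ) (r c : κ) :
    (A * W * Aᵀ) r c = trace (vecMulVec (A c) (A r) * W) := by
  simp only [trace, diag_apply, mul_apply, vecMulVec_apply, transpose_apply, Finset.sum_mul]
  exact Finset.sum_congr rfl fun _ _ => Finset.sum_congr rfl fun _ _ => by ring

def sandwichRepr (A : ι → Matrix κ ν ℝ) (d : κ × κ → ℝ) : Matrix ν ν ℝ :=
  ∑ v, d v • ∑ j, vecMulVec (A j v.1) (A j v.2)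

lemma trace_sandwichRepr_mul (A : ι → Matrix κ ν ℝ) (d : κ × κ → ℝ) (W : Matrix ν ν ℝ) :
    trace (sandwichRepr A d * W) = ∑ v, d v * (∑ j, A j * W * (A j)ᵀ) v.2 v.1 := by
  simp [sandwichRepr, Finset.sum_mul, trace_sum, Matrix.sum_apply,
    mul_mul_transpose_apply_eq_trace, Finset.mul_sum]

omit [Fintype ν] in
lemma sandwichRepr_transpose (A : ι → Matrix κ ν ℝ) {d : κ × κ → ℝ} (hd : ∀ v, d v.swap = d v) :
    (sandwichRepr A d)ᵀ = sandwichRepr A d := by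
  simp only [sandwichRepr, transpose_sum, transpose_smul, transpose_vecMulVec]
  exact Fintype.sum_equiv (Equiv.prodComm κ κ) _ _ fun v => by simp [hd]

lemma trace_sandwichRepr_mul_transpose (A : ι → Matrix κ ν ℝ) (B : ι' → Matrix κ' ν ℝ)
    (D₁ : Matrix (κ × κ) α ℝ) (D₂ : Matrix (κ' × κ') β ℝ) (a : α) (b : β) :
    trace (sandwichRepr A (fun v => D₁ v a) * (sandwichRepr B (fun w => D₂ w b))ᵀ) =
      (D₁ᵀ * (∑ i, ∑ j, kroneckerMap (· * ·) (A i * (B j)ᵀ) (A i * (B j)ᵀ)) * D₂) a b := by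
  have hK : ∑ i, ∑ j, kroneckerMap (· * ·) (A i * (B j)ᵀ) (A i * (B j)ᵀ) =
      of fun v w => ∑ i, ∑ j, (A i v.1 ⬝ᵥ B j w.1) * (A i v.2 ⬝ᵥ B j w.2) := by
    ext v w
    simp [Matrix.sum_apply, mul_apply, dotProduct]
  rw [hK]
  simp only [sandwichRepr, transpose_sum, transpose_smul, transpose_vecMulVec, Finset.sum_mul,
    Finset.mul_sum, smul_mul_assoc, mul_smul_comm, trace_sum, trace_smul, vecMulVec_mul_vecMulVec,
    trace_vecMulVec, dotProduct_smul, smul_eq_mul, Finset.mul_sum, mul_apply, of_apply,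
    transpose_apply]
  refine Finset.sum_congr rfl fun w _ => ?_
  rw [Finset.sum_comm]
  refine Finset.sum_congr rfl fun v _ => ?_
  rw [Finset.sum_comm]
  exact Finset.sum_congr rfl fun i _ => Finset.sum_congr rfl fun j _ => by ring
end

section
variable {Ω ι : Type*} [MeasurableSpace Ω] [Fintype ι] [DecidableEq ι] {μ : Measure Ω}
  {u : Ω → ι → ℝ}

omit [DecidableEq ι] in
lemma map_eq_pi_gaussianReal (hindep : iIndepFun (fun i ω => u ω i) μ)
    (hlaw : ∀ i, μ.map (fun ω => u ω i) = gaussianReal 0 1) :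
    μ.map u = Measure.pi fun _ => gaussianReal 0 1 := by
  have hmeas (i : ι) : AEMeasurable (fun ω => u ω i) μ :=
    .of_map_ne_zero (by rw [hlaw i]; exact IsProbabilityMeasure.ne_zero _)
  simpa [hlaw] using hindep.map_fun_eq_pi_map hmeas

lemma covariance_trace_mul_vecMulVec_sub_one (hindep : iIndepFun (fun i ω => u ω i) μ)
    (hlaw : ∀ i, μ.map (fun ω => u ω i) = gaussianReal 0 1) (C₁ C₂ : Matrix ι ι ℝ) :
    (∫ ω, trace (C₁ * (vecMulVec (u ω) (u ω) - 1)) * trace (C₂ * (vecMulVec (u ω) (u ω) - 1)) ∂μ)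
      - (∫ ω, trace (C₁ * (vecMulVec (u ω) (u ω) - 1)) ∂μ)
        * (∫ ω, trace (C₂ * (vecMulVec (u ω) (u ω) - 1)) ∂μ) =
      trace (C₁ * C₂) + trace (C₁ * C₂ᵀ) := by
  have hu : AEMeasurable u μ := .of_map_ne_zero (by
    rw [map_eq_pi_gaussianReal hindep hlaw]; exact IsProbabilityMeasure.ne_zero _)
  have hpi (F : (ι → ℝ) → ℝ) (hF : Continuous F) :
      ∫ ω, F (u ω) ∂μ = ∫ x, F x ∂Measure.pi fun _ => gaussianReal 0 1 := by
    rw [← map_eq_pi_gaussianReal hindep hlaw, integral_map hu hF.aestronglyMeasurable]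
  have h₁₂ : ∫ ω, trace (C₁ * (vecMulVec (u ω) (u ω) - 1))
      * trace (C₂ * (vecMulVec (u ω) (u ω) - 1)) ∂μ = trace (C₁ * C₂) + trace (C₁ * C₂ᵀ) :=
    (hpi _ (by fun_prop)).trans (integral_trace_mul_mul_trace_mul_pi C₁ C₂)
  have h₁ : ∫ ω, trace (C₁ * (vecMulVec (u ω) (u ω) - 1)) ∂μ = 0 :=
    (hpi _ (by fun_prop)).trans (integral_trace_mul_vecMulVec_sub_one_pi C₁)
  rw [h₁₂, h₁, zero_mul, sub_zero]
end

section
variable {n : Type*} [Fintype n] [DecidableEq n]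

lemma nonsing_inv_mul_self_mul_nonsing_inv (V : Matrix n n ℝ) : V⁻¹ * V * V⁻¹ = V⁻¹ := by
  by_cases h : IsUnit V.det
  · rw [nonsing_inv_mul _ h, one_mul]
  · simp [nonsing_inv_apply_not_isUnit _ h]

lemma transpose_nonsing_inv_of_mul_transpose_eq {R V : Matrix n n ℝ} (hR : R * Rᵀ = V) :
    V⁻¹ᵀ = V⁻¹ := by
  rw [transpose_nonsing_inv, ← hR, transpose_mul, transpose_transpose]

lemma inv_sq_smul_vecMulVec_sub {R V : Matrix n n ℝ} (hR : R * Rᵀ = V) {σ : ℝ} (hσ : σ ≠ 0)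
    (x : n → ℝ) :
    (σ ^ 2)⁻¹ • vecMulVec (σ • (R *ᵥ x)) (σ • (R *ᵥ x)) - V = R * (vecMulVec x x - 1) * Rᵀ := by
  have hsq : vecMulVec (σ • (R *ᵥ x)) (σ • (R *ᵥ x)) = σ ^ 2 • (R * vecMulVec x x * Rᵀ) := by
    rw [mul_vecMulVec, vecMulVec_mul, vecMul_transpose, smul_vecMulVec, vecMulVec_smul, smul_smul,
      sq]
  rw [hsq, smul_smul, inv_mul_cancel₀ (pow_ne_zero 2 hσ), one_smul, ← hR, Matrix.mul_sub,
    Matrix.sub_mul, Matrix.mul_one]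

variable {q q' : Type*} {R V : Matrix n n ℝ}

lemma transpose_mul_inv_mul_sandwich (hR : R * Rᵀ = V) (Z : Matrix n q ℝ) (X : Matrix n n ℝ) :
    Zᵀ * V⁻¹ * (R * X * Rᵀ) * V⁻¹ * Z = (Zᵀ * V⁻¹ * R) * X * (Zᵀ * V⁻¹ * R)ᵀ := by
  simp only [transpose_mul, transpose_transpose, transpose_nonsing_inv_of_mul_transpose_eq hR,
    Matrix.mul_assoc]

lemma whitened_mul_transpose (hR : R * Rᵀ = V) (Z₁ : Matrix n q ℝ) (Z₂ : Matrix n q' ℝ) :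
    (Z₁ᵀ * V⁻¹ * R) * (Z₂ᵀ * V⁻¹ * R)ᵀ = Z₁ᵀ * V⁻¹ * Z₂ := by
  rw [transpose_mul, transpose_mul, transpose_transpose,
    transpose_nonsing_inv_of_mul_transpose_eq hR]
  calc Z₁ᵀ * V⁻¹ * R * (Rᵀ * (V⁻¹ * Z₂)) = Z₁ᵀ * (V⁻¹ * (R * Rᵀ) * V⁻¹) * Z₂ := by
        simp only [Matrix.mul_assoc]
    _ = Z₁ᵀ * V⁻¹ * Z₂ := by rw [hR, nonsing_inv_mul_self_mul_nonsing_inv]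
end

lemma dup_swap (q : ℕ) (v : Fin q × Fin q) (a : VechIdx q) : dup q v.swap a = dup q v a := by
  simp only [dup, Prod.fst_swap, Prod.snd_swap]
  exact if_congr (by tauto) rfl rfl

theorem stmt7_general {Ω : Type*} [MeasurableSpace Ω] (μ : Measure Ω)
    (n r : ℕ) (σ : ℝ) (hσ : 0 < σ)
    (V R : Matrix (Fin n) (Fin n) ℝ) (hR : R * Rᵀ = V)
    (l q : Fin r → ℕ)
    (Z : (k : Fin r) → Fin (l k) → Matrix (Fin n) (Fin (q k)) ℝ)
    (u : Ω → Fin n → ℝ)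
    (huindep : iIndepFun (fun i ω => u ω i) μ)
    (hulaw : ∀ i, Measure.map (fun ω => u ω i) μ = gaussianReal 0 1)
    (e : Ω → Fin n → ℝ) (he : ∀ ω, e ω = σ • (R *ᵥ u ω))
    (s : (k : Fin r) → Ω → (Fin (q k) × Fin (q k)) → ℝ)
    (hs : ∀ k ω idx, s k ω idx =
      ((1 / 2 : ℝ) •
        ∑ j, (Z k j)ᵀ * V⁻¹ * ((σ ^ 2)⁻¹ • vecMulVec (e ω) (e ω) - V) * V⁻¹ * Z k j)
        idx.2 idx.1)
    (t : (k : Fin r) → Ω → VechIdx (q k) → ℝ)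
    (ht : ∀ k ω, t k ω = (dup (q k))ᵀ.mulVec (s k ω)) :
    ∀ (k₁ k₂ : Fin r) (a : VechIdx (q k₁)) (b : VechIdx (q k₂)),
      (∫ ω, t k₁ ω a * t k₂ ω b ∂μ) - (∫ ω, t k₁ ω a ∂μ) * (∫ ω, t k₂ ω b ∂μ) =
        ((1 / 2 : ℝ) • ((dup (q k₁))ᵀ *
          (∑ i, ∑ j, kroneckerMap (· * ·) ((Z k₁ i)ᵀ * V⁻¹ * Z k₂ j)
            ((Z k₁ i)ᵀ * V⁻¹ * Z k₂ j)) * dup (q k₂))) a b := by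
  intro k₁ k₂ a b
  have hW (k : Fin r) (ω : Ω) :
      ∑ j, (Z k j)ᵀ * V⁻¹ * ((σ ^ 2)⁻¹ • vecMulVec (e ω) (e ω) - V) * V⁻¹ * Z k j =
        ∑ j, ((Z k j)ᵀ * V⁻¹ * R) * (vecMulVec (u ω) (u ω) - 1) * ((Z k j)ᵀ * V⁻¹ * R)ᵀ := by
    simp only [he, inv_sq_smul_vecMulVec_sub hR hσ.ne', transpose_mul_inv_mul_sandwich hR]
  have ht_trace (k : Fin r) (ω : Ω) (c : VechIdx (q k)) :
      t k ω c = trace (sandwichRepr (fun j => (Z k j)ᵀ * V⁻¹ * R)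
        (fun v => ((1 / 2 : ℝ) • dup (q k)) v c) * (vecMulVec (u ω) (u ω) - 1)) := by
    rw [ht, trace_sandwichRepr_mul, ← hW]
    simp only [mulVec, dotProduct, transpose_apply, hs, Matrix.smul_apply, smul_eq_mul]
    exact Finset.sum_congr rfl fun v _ => by ring
  have hsym : (sandwichRepr (fun j => (Z k₂ j)ᵀ * V⁻¹ * R)
      (fun w => ((1 / 2 : ℝ) • dup (q k₂)) w b))ᵀ =
      sandwichRepr (fun j => (Z k₂ j)ᵀ * V⁻¹ * R) (fun w => ((1 / 2 : ℝ) • dup (q k₂)) w b) :=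
    sandwichRepr_transpose _ fun w => by simp [dup_swap]
  simp_rw [ht_trace]
  rw [covariance_trace_mul_vecMulVec_sub_one huindep hulaw, hsym, ← two_mul, ← hsym,
    trace_sandwichRepr_mul_transpose]
  simp only [whitened_mul_transpose hR, transpose_smul, Matrix.smul_mul, Matrix.mul_smul,
    Matrix.smul_apply, smul_eq_mul]
  ring

/-- In the multi-factor LMM, with `e = σ R u` for `u` a vector of i.i.d.
standard normals, the cross-covariance matrix between the half-vectorized scores
`𝒟_{q_{k₁}}ᵀ s_{k₁}` and `𝒟_{q_{k₂}}ᵀ s_{k₂}` equals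
`(1/2) 𝒟_{q_{k₁}}ᵀ [ ∑_i ∑_j (Z_{(k₁,i)}ᵀ V⁻¹ Z_{(k₂,j)}) ⊗ (Z_{(k₁,i)}ᵀ V⁻¹ Z_{(k₂,j)}) ] 𝒟_{q_{k₂}}`. -/
theorem stmt7 {Ω : Type*} [MeasurableSpace Ω] (μ : Measure Ω) [IsProbabilityMeasure μ]
    (n p r : ℕ) (hn : 0 < n) (hp : 0 < p) (σ : ℝ) (hσ : 0 < σ)
    (V R : Matrix (Fin n) (Fin n) ℝ) (hVpd : V.PosDef) (hR : R * Rᵀ = V)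
    (l q : Fin r → ℕ)
    (Z : (k : Fin r) → Fin (l k) → Matrix (Fin n) (Fin (q k)) ℝ)
    (u : Ω → Fin n → ℝ)
    (humeas : ∀ i, Measurable fun ω => u ω i)
    (huindep : iIndepFun (fun i ω => u ω i) μ)
    (hulaw : ∀ i, Measure.map (fun ω => u ω i) μ = gaussianReal 0 1)
    (e : Ω → Fin n → ℝ) (he : ∀ ω, e ω = σ • (R *ᵥ u ω))
    (s : (k : Fin r) → Ω → (Fin (q k) × Fin (q k)) → ℝ)
    (hs : ∀ k ω idx, s k ω idx =
      ((1 / 2 : ℝ) •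
        ∑ j, (Z k j)ᵀ * V⁻¹ * ((σ ^ 2)⁻¹ • vecMulVec (e ω) (e ω) - V) * V⁻¹ * Z k j)
        idx.2 idx.1)
    (t : (k : Fin r) → Ω → VechIdx (q k) → ℝ)
    (ht : ∀ k ω, t k ω = (dup (q k))ᵀ.mulVec (s k ω)) :
    ∀ (k₁ k₂ : Fin r) (a : VechIdx (q k₁)) (b : VechIdx (q k₂)),
      (∫ ω, t k₁ ω a * t k₂ ω b ∂μ) - (∫ ω, t k₁ ω a ∂μ) * (∫ ω, t k₂ ω b ∂μ) =
        ((1 / 2 : ℝ) • ((dup (q k₁))ᵀ *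
          (∑ i, ∑ j, kroneckerMap (· * ·) ((Z k₁ i)ᵀ * V⁻¹ * Z k₂ j)
            ((Z k₁ i)ᵀ * V⁻¹ * Z k₂ j)) * dup (q k₂))) a b :=
  stmt7_general μ n r σ hσ V R hR l q Z u huindep hulaw e he s hs t ht
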